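/- If G is a graph of order n with minimum degree δ ≥ 1, minimum hop degree δ_h ≥ 1, and n < δ·δ_h/(ln δ_h + 1), then γ_{rh}(G) ≤ ((ln(δ_h + 1) + 1)/(δ_h + 1)) · n. -/

import Mathlib

open Finset

noncomputable section
open scoped Classical

variable {n : ℕ}

/-- The set of vertices at distance exactly 2 from `i`. -/
def N2 (G : SimpleGraph (Fin n)) (i : Fin n) : Finset (Fin n) :=
  Finset.univ.filter (fun j => G.dist i j = 2)

/-- The neighborhood of `i`. -/
def Nbr (G : SimpleGraph (Fin n)) (i : Fin n) : Finset (Fin n) :=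
  Finset.univ.filter (fun j => G.Adj i j)

/-- Hop degree of a vertex. -/
def hopDeg (G : SimpleGraph (Fin n)) (i : Fin n) : ℕ := (N2 G i).card

/-- Minimum hop degree. -/
def minHopDeg (G : SimpleGraph (Fin n)) : ℕ := ⨅ i, hopDeg G i

/-- Minimum degree. -/
def minDeg (G : SimpleGraph (Fin n)) : ℕ := ⨅ i, (Nbr G i).card

def IsHopDomSet (G : SimpleGraph (Fin n)) (S : Finset (Fin n)) : Prop :=
  ∀ u, u ∉ S → ∃ v ∈ S, G.dist u v = 2

def IsTwoStepDomSet (G : SimpleGraph (Fin n)) (S : Finset (Fin n)) : Prop :=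
  ∀ u : Fin n, ∃ v ∈ S, G.dist u v = 2

def IsRestrainedHopDomSet (G : SimpleGraph (Fin n)) (S : Finset (Fin n)) : Prop :=
  IsHopDomSet G S ∧ ∀ u, u ∉ S → ∃ v, v ∉ S ∧ G.Adj u v

def IsTotalRestrainedHopDomSet (G : SimpleGraph (Fin n)) (S : Finset (Fin n)) : Prop :=
  IsTwoStepDomSet G S ∧ ∀ u, u ∉ S → ∃ v, v ∉ S ∧ G.Adj u v

def IsTwoStepRestrainedDomSet (G : SimpleGraph (Fin n)) (S : Finset (Fin n)) : Prop :=
  IsHopDomSet G S ∧ ∀ u, u ∉ S → ∃ v, v ∉ S ∧ G.dist u v = 2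

def IsTotalTwoStepRestrainedDomSet (G : SimpleGraph (Fin n)) (S : Finset (Fin n)) : Prop :=
  IsTwoStepDomSet G S ∧ ∀ u, u ∉ S → ∃ v, v ∉ S ∧ G.dist u v = 2

def hopDomNum (G : SimpleGraph (Fin n)) : ℕ :=
  sInf {k | ∃ S : Finset (Fin n), IsHopDomSet G S ∧ S.card = k}

def twoStepDomNum (G : SimpleGraph (Fin n)) : ℕ :=
  sInf {k | ∃ S : Finset (Fin n), IsTwoStepDomSet G S ∧ S.card = k}

def rhDomNum (G : SimpleGraph (Fin n)) : ℕ :=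
  sInf {k | ∃ S : Finset (Fin n), IsRestrainedHopDomSet G S ∧ S.card = k}

def trhDomNum (G : SimpleGraph (Fin n)) : ℕ :=
  sInf {k | ∃ S : Finset (Fin n), IsTotalRestrainedHopDomSet G S ∧ S.card = k}

def tsrDomNum (G : SimpleGraph (Fin n)) : ℕ :=
  sInf {k | ∃ S : Finset (Fin n), IsTwoStepRestrainedDomSet G S ∧ S.card = k}

def ttsrDomNum (G : SimpleGraph (Fin n)) : ℕ :=
  sInf {k | ∃ S : Finset (Fin n), IsTotalTwoStepRestrainedDomSet G S ∧ S.card = k}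

/-- The graph `Dist(G;2)` joining vertices at distance exactly 2 in `G`. -/
def dist2Graph (G : SimpleGraph (Fin n)) : SimpleGraph (Fin n) where
  Adj u v := u ≠ v ∧ G.dist u v = 2
  symm := by
    constructor
    intro u v h
    exact ⟨h.1.symm, by rw [SimpleGraph.dist_comm]; exact h.2⟩
  loopless := ⟨fun v h => h.1 rfl⟩

def domNum (H : SimpleGraph (Fin n)) : ℕ :=
  sInf {k | ∃ S : Finset (Fin n), (∀ u, u ∉ S → ∃ v ∈ S, H.Adj u v) ∧ S.card = k}

def totalDomNum (H : SimpleGraph (Fin n)) : ℕ :=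
  sInf {k | ∃ S : Finset (Fin n), (∀ u : Fin n, ∃ v ∈ S, H.Adj u v) ∧ S.card = k}

/-- Matching number: maximum number of edges in a matching. -/
def matchingNum (G : SimpleGraph (Fin n)) : ℕ :=
  sSup {k | ∃ M : SimpleGraph.Subgraph G, M.IsMatching ∧ M.edgeSet.ncard = k}

/-- A hop matching: a set of paths of length two, no two of which share an end vertex. -/
def IsHopMatching (G : SimpleGraph (Fin n)) (H : Finset (Fin n × Fin n × Fin n)) : Prop :=
  (∀ t ∈ H, G.Adj t.1 t.2.1 ∧ G.Adj t.2.1 t.2.2 ∧ t.1 ≠ t.2.2) ∧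
  ∀ t ∈ H, ∀ t' ∈ H, t ≠ t' →
    t.1 ≠ t'.1 ∧ t.1 ≠ t'.2.2 ∧ t.2.2 ≠ t'.1 ∧ t.2.2 ≠ t'.2.2

/-- Hop matching number. -/
def hopMatchingNum (G : SimpleGraph (Fin n)) : ℕ :=
  sSup {k | ∃ H : Finset (Fin n × Fin n × Fin n), IsHopMatching G H ∧ H.card = k}

def frh (G : SimpleGraph (Fin n)) (p : Fin n → ℝ) : ℝ :=
  (∑ i, p i) + (∑ i, (1 - p i) * ∏ j ∈ N2 G i, (1 - p j)) +
  ∑ i, (1 - p i) * (1 - (1 - p i) * ∏ j ∈ N2 G i, (1 - p j)) *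
    ∏ j ∈ Nbr G i, (p j + (1 - p j) * ∏ k ∈ N2 G j, (1 - p k))

def f2sr (G : SimpleGraph (Fin n)) (p : Fin n → ℝ) : ℝ :=
  (∑ i, p i) + (∑ i, (1 - p i) * ∏ j ∈ N2 G i, (1 - p j)) +
  ∑ i, (1 - p i) * (1 - (1 - p i) * ∏ j ∈ N2 G i, (1 - p j)) *
    ∏ j ∈ N2 G i, (p j + (1 - p j) * ∏ k ∈ N2 G j, (1 - p k))

def ZSet (G : SimpleGraph (Fin n)) (X : Finset (Fin n)) : Finset (Fin n) :=
  Finset.univ.filter (fun i => i ∉ X ∧ N2 G i ∩ X = ∅)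

def YSet (G : SimpleGraph (Fin n)) (X : Finset (Fin n)) : Finset (Fin n) :=
  Finset.univ.filter (fun i => i ∉ X ∪ ZSet G X ∧ Nbr G i ⊆ X ∪ ZSet G X)

def DSet (G : SimpleGraph (Fin n)) (X : Finset (Fin n)) : Finset (Fin n) :=
  X ∪ ZSet G X ∪ YSet G X

/-!
Put each vertex into a set `X` independently with probability `p = ln (δ_h + 1) / (δ_h + 1)`
and add the set `Z` of vertices outside `X` with no vertex of `X` at distance two. Then `X ∪ Z`
is hop dominating, of expected size at most `n p + n (1 - p) ^ (δ_h + 1) ≤ (ln (δ_h + 1) + 1) /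
(δ_h + 1) · n`. As `(ln x + 1) / x` decreases for `x ≥ 1`, the hypothesis on `n` puts this below
`δ`, and a hop dominating set with fewer than `δ` vertices is restrained: every vertex has a
neighbour outside it.
-/

open Real

section BernoulliSubset

variable {α : Type*} [Fintype α]

/-- The law of a random subset of `α` containing each element independently with probability
`p`. -/
def bernoulliWeight (p : ℝ) (X : Finset α) : ℝ :=
  p ^ #X * (1 - p) ^ (Fintype.card α - #X)

lemma bernoulliWeight_pos {p : ℝ} (hp0 : 0 < p) (hp1 : p < 1) (X : Finset α) :
    0 < bernoulliWeight p X :=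
  mul_pos (pow_pos hp0 _) (pow_pos (sub_pos.mpr hp1) _)

lemma sum_bernoulliWeight (p : ℝ) : ∑ X : Finset α, bernoulliWeight p X = 1 := by
  simp [bernoulliWeight, Fintype.sum_pow_mul_eq_add_pow]

lemma exists_le_sum_bernoulliWeight_mul {p : ℝ} (hp0 : 0 < p) (hp1 : p < 1)
    (f : Finset α → ℝ) : ∃ X, f X ≤ ∑ Y : Finset α, bernoulliWeight p Y * f Y := by
  set E := ∑ Y : Finset α, bernoulliWeight p Y * f Y
  have hsum : ∑ X : Finset α, bernoulliWeight p X * f X ≤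
      ∑ X : Finset α, bernoulliWeight p X * E := by
    rw [← sum_mul, sum_bernoulliWeight, one_mul]
  obtain ⟨X, -, hX⟩ := exists_le_of_sum_le univ_nonempty hsum
  exact ⟨X, le_of_mul_le_mul_left hX (bernoulliWeight_pos hp0 hp1 X)⟩

variable [DecidableEq α]

lemma sum_bernoulliWeight_disjoint (p : ℝ) (A : Finset α) :
    ∑ X : Finset α with Disjoint X A, bernoulliWeight p X = (1 - p) ^ #A := by
  have hfilter : ({X | Disjoint X A} : Finset (Finset α)) = Aᶜ.powerset := by
    ext X
    simp [subset_compl_iff_disjoint_right]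
  have hweight : ∀ X ∈ Aᶜ.powerset,
      bernoulliWeight p X = (1 - p) ^ #A * (p ^ #X * (1 - p) ^ (#Aᶜ - #X)) := by
    intro X hX
    have hXA : #X ≤ #Aᶜ := card_le_card (mem_powerset.mp hX)
    have hA : #A ≤ Fintype.card α := card_le_univ A
    rw [card_compl] at hXA ⊢
    rw [bernoulliWeight, mul_left_comm, ← pow_add]
    congr 2
    omega
  rw [hfilter, sum_congr rfl hweight, ← mul_sum, sum_pow_mul_eq_add_pow]
  simp

lemma sum_bernoulliWeight_mul_card_filter_disjoint (p : ℝ) (B : α → Finset α) :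
    ∑ X : Finset α, bernoulliWeight p X * #{i | Disjoint X (B i)} =
      ∑ i, (1 - p) ^ #(B i) := by
  simp_rw [card_filter, Nat.cast_sum, mul_sum, Nat.cast_ite, Nat.cast_one, Nat.cast_zero,
    mul_ite, mul_one, mul_zero]
  rw [sum_comm]
  exact sum_congr rfl fun i _ => by rw [← sum_filter, sum_bernoulliWeight_disjoint]

lemma sum_bernoulliWeight_mul_card (p : ℝ) :
    ∑ X : Finset α, bernoulliWeight p X * #X = Fintype.card α * p := by
  have hcompl : ∀ X : Finset α, (#X : ℝ) = Fintype.card α - #{i | Disjoint X {i}} := by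
    intro X
    have : ({i | Disjoint X {i}} : Finset α) = Xᶜ := by ext; simp
    rw [this, card_compl, Nat.cast_sub (card_le_univ X)]
    ring
  rw [sum_congr rfl fun X _ => congrArg (bernoulliWeight p X * ·) (hcompl X)]
  simp_rw [mul_sub, sum_sub_distrib, ← sum_mul, sum_bernoulliWeight,
    sum_bernoulliWeight_mul_card_filter_disjoint]
  simp

/-- First-moment argument: the right-hand side bounds the expectation of the left-hand side
for a `p`-random `X`. -/
theorem exists_card_add_card_filter_disjoint_le (B : α → Finset α) {m : ℕ}
    (hB : ∀ i, m ≤ #(B i)) {p : ℝ} (hp0 : 0 < p) (hp1 : p < 1) :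
    ∃ X : Finset α, (#X : ℝ) + #{i | Disjoint X (B i)} ≤
      Fintype.card α * (p + (1 - p) ^ m) := by
  obtain ⟨X, hX⟩ := exists_le_sum_bernoulliWeight_mul hp0 hp1
    fun X => (#X : ℝ) + #{i | Disjoint X (B i)}
  refine ⟨X, hX.trans ?_⟩
  simp_rw [mul_add, sum_add_distrib, sum_bernoulliWeight_mul_card,
    sum_bernoulliWeight_mul_card_filter_disjoint]
  gcongr
  calc ∑ i, (1 - p) ^ #(B i) ≤ ∑ _i : α, (1 - p) ^ m :=
        sum_le_sum fun i _ => pow_le_pow_of_le_one (by linarith) (by linarith) (hB i)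
    _ = Fintype.card α * (1 - p) ^ m := by simp

end BernoulliSubset

lemma log_div_add_one_sub_log_div_pow_le {m : ℕ} (hm : 0 < m) :
    log m / m + (1 - log m / m) ^ m ≤ (log m + 1) / m := by
  have hm' : (0 : ℝ) < m := by exact_mod_cast hm
  have hpow : (1 - log m / m) ^ m ≤ 1 / m := by
    calc (1 - log m / m) ^ m ≤ exp (-log m) :=
          one_sub_div_pow_le_exp_neg ((log_le_sub_one_of_pos hm').trans (by linarith))
      _ = 1 / m := by rw [exp_neg, exp_log hm', one_div]
  rw [add_div]
  linarith

lemma log_add_one_add_one_div_le {x : ℝ} (hx : 1 ≤ x) :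
    (log (x + 1) + 1) / (x + 1) ≤ (log x + 1) / x := by
  have hx0 : 0 < x := by linarith
  have hgap : x * (log (x + 1) - log x) ≤ 1 := by
    rw [← log_div (by linarith) hx0.ne']
    have := log_le_sub_one_of_pos (x := (x + 1) / x) (by positivity)
    rw [show (x + 1) / x - 1 = 1 / x by field_simp; ring] at this
    calc x * log ((x + 1) / x) ≤ x * (1 / x) := by gcongr
      _ = 1 := by field_simp
  rw [div_le_div_iff₀ (by linarith) hx0]
  nlinarith [log_nonneg hx]

section HopDomination

variable (G : SimpleGraph (Fin n))

lemma mem_N2 {i j : Fin n} : j ∈ N2 G i ↔ G.dist i j = 2 := by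
  simp [N2]

lemma mem_Nbr {i j : Fin n} : j ∈ Nbr G i ↔ G.Adj i j := by
  simp [Nbr]

lemma minHopDeg_le_card_N2 (i : Fin n) : minHopDeg G ≤ #(N2 G i) :=
  ciInf_le (OrderBot.bddBelow _) i

lemma minDeg_le_card_Nbr (i : Fin n) : minDeg G ≤ #(Nbr G i) :=
  ciInf_le (OrderBot.bddBelow _) i

lemma ZSet_eq_filter_disjoint (X : Finset (Fin n)) :
    ZSet G X = ({i | Disjoint X (insert i (N2 G i))} : Finset (Fin n)) := by
  ext i
  simp [ZSet, disjoint_insert_right, ← disjoint_iff_inter_eq_empty, disjoint_comm]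

lemma isHopDomSet_union_ZSet (X : Finset (Fin n)) : IsHopDomSet G (X ∪ ZSet G X) := by
  intro u hu
  have huX : u ∉ X := fun h => hu (mem_union_left _ h)
  have hmeet : ¬ Disjoint (N2 G u) X := fun h =>
    hu (mem_union_right _ (by simp [ZSet, disjoint_iff_inter_eq_empty.mp h, huX]))
  obtain ⟨v, hvN2, hvX⟩ := not_disjoint_iff.mp hmeet
  exact ⟨v, mem_union_left _ hvX, (mem_N2 G).mp hvN2⟩

theorem exists_isHopDomSet_card_le (hδh : 1 ≤ minHopDeg G) :
    ∃ S, IsHopDomSet G S ∧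
      (#S : ℝ) ≤ (log (minHopDeg G + 1) + 1) / (minHopDeg G + 1) * n := by
  set m := minHopDeg G + 1
  have hm : 1 < m := by omega
  have hp0 : 0 < log m / m := div_pos (log_pos (by exact_mod_cast hm)) (by positivity)
  have hp1 : log m / m < 1 := (div_lt_one (by positivity)).mpr
    ((log_le_sub_one_of_pos (by positivity)).trans_lt (by linarith))
  have hB : ∀ i, m ≤ #(insert i (N2 G i)) := fun i => by
    rw [card_insert_of_notMem (by simp [mem_N2])]
    exact Nat.succ_le_succ (minHopDeg_le_card_N2 G i)
  obtain ⟨X, hX⟩ := exists_card_add_card_filter_disjoint_le _ hB hp0 hp1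
  refine ⟨X ∪ ZSet G X, isHopDomSet_union_ZSet G X, ?_⟩
  rw [← ZSet_eq_filter_disjoint, Fintype.card_fin] at hX
  calc (#(X ∪ ZSet G X) : ℝ) ≤ #X + #(ZSet G X) := by exact_mod_cast card_union_le _ _
    _ ≤ n * (log m / m + (1 - log m / m) ^ m) := hX
    _ ≤ n * ((log m + 1) / m) := by gcongr; exact log_div_add_one_sub_log_div_pow_le (by omega)
    _ = _ := by push_cast [m]; ring

lemma IsHopDomSet.isRestrainedHopDomSet {S : Finset (Fin n)} (hS : IsHopDomSet G S)
    (hcard : #S < minDeg G) : IsRestrainedHopDomSet G S := by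
  refine ⟨hS, fun u _ => ?_⟩
  have : (Nbr G u \ S).Nonempty := by
    rw [← card_pos]
    have := le_card_sdiff S (Nbr G u)
    have := minDeg_le_card_Nbr G u
    omega
  obtain ⟨v, hv⟩ := this
  exact ⟨v, (mem_sdiff.mp hv).2, (mem_Nbr G).mp (mem_sdiff.mp hv).1⟩

lemma rhDomNum_le_card {S : Finset (Fin n)} (hS : IsRestrainedHopDomSet G S) :
    rhDomNum G ≤ #S :=
  Nat.sInf_le ⟨S, hS, rfl⟩

end HopDomination

theorem stmt10_general {n : ℕ} (G : SimpleGraph (Fin n))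
    (hδh : 1 ≤ minHopDeg G)
    (hn : (n : ℝ) < (minDeg G) * (minHopDeg G) / (Real.log (minHopDeg G) + 1)) :
    (rhDomNum G : ℝ) ≤
      (Real.log (minHopDeg G + 1) + 1) / (minHopDeg G + 1) * n := by
  obtain ⟨S, hS, hcard⟩ := exists_isHopDomSet_card_le G hδh
  have hd : (1 : ℝ) ≤ minHopDeg G := by exact_mod_cast hδh
  have hS_lt : (#S : ℝ) < minDeg G := by
    rw [lt_div_iff₀ (by linarith [log_nonneg hd])] at hn
    calc (#S : ℝ) ≤ (log (minHopDeg G + 1) + 1) / (minHopDeg G + 1) * n := hcard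
      _ ≤ (log (minHopDeg G) + 1) / minHopDeg G * n := by
        gcongr ?_ * _
        exact log_add_one_add_one_div_le hd
      _ < minDeg G := by
        rw [div_mul_eq_mul_div, div_lt_iff₀ (by linarith)]
        linarith
  have hrh : rhDomNum G ≤ #S :=
    rhDomNum_le_card G (hS.isRestrainedHopDomSet G (by exact_mod_cast hS_lt))
  calc (rhDomNum G : ℝ) ≤ #S := by exact_mod_cast hrh
    _ ≤ _ := hcard

theorem stmt10 {n : ℕ} (G : SimpleGraph (Fin n)) (hδ : 1 ≤ minDeg G)
    (hδh : 1 ≤ minHopDeg G)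
    (hn : (n : ℝ) < (minDeg G) * (minHopDeg G) / (Real.log (minHopDeg G) + 1)) :
    (rhDomNum G : ℝ) ≤
      (Real.log (minHopDeg G + 1) + 1) / (minHopDeg G + 1) * n :=
  stmt10_general G hδh hn
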